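/- arXiv:2311.12963 — 2 statements merged into one kernel-verified Lean document; each statement's English description precedes it below -/
import Mathlib

section
/- Let G be a finite group with r(G) ≤ n. Then the homogeneous cover H(n,G) is homogeneous of rank n: Γ_n(H(n,G)) is nonempty and Aut(H(n,G)) acts transitively on Γ_n(H(n,G)). -/
/-- `(x₁,…,xₙ)` is a generating sequence of `G`: the entries generate `G`. -/
def IsGenSeq {G : Type*} [Group G] {n : ℕ} (x : Fin n → G) : Prop :=
  Subgroup.closure (Set.range x) = ⊤

/-- `r(G)`: the least `n` such that `G` has a generating sequence of length `n`. -/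
noncomputable def grank (G : Type*) [Group G] : ℕ :=
  sInf {n : ℕ | ∃ x : Fin n → G, IsGenSeq x}

/-- `G` is homogeneous of rank `n`: `Γ_n(G)` is nonempty and `Aut(G)` acts
transitively on it. -/
def IsHomogeneous (G : Type*) [Group G] (n : ℕ) : Prop :=
  (∃ x : Fin n → G, IsGenSeq x) ∧
    ∀ x y : Fin n → G, IsGenSeq x → IsGenSeq y → ∃ f : G ≃* G, ∀ i, f (x i) = y i

/-- The intersection of the kernels of all surjective homomorphisms `F_n → G`. -/
def coverKer (n : ℕ) (G : Type*) [Group G] : Subgroup (FreeGroup (Fin n)) :=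
  ⨅ f ∈ {f : FreeGroup (Fin n) →* G | Function.Surjective f}, MonoidHom.ker f

instance coverKer_normal (n : ℕ) (G : Type*) [Group G] : (coverKer n G).Normal := by
  constructor
  intro x hx g
  simp only [coverKer, Subgroup.mem_iInf] at hx ⊢
  intro f hf
  exact (MonoidHom.normal_ker f).conj_mem x (hx f hf) g

/-- The homogeneous cover `H(n,G) = F_n / K`, where `K` is the intersection of the
kernels of all surjective homomorphisms `F_n → G`. -/
abbrev HomogeneousCover (n : ℕ) (G : Type*) [Group G] :=
  FreeGroup (Fin n) ⧸ coverKer n G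

/-!
`K` is killed by every surjection `ψ : F_n → H(n,G)`: composing `ψ` with any surjection
`H(n,G) → G` induced by a surjection `F_n → G` gives again a surjection `F_n → G`. So `ψ`
descends to a surjective endomorphism of the finite group `H(n,G)`, i.e. an automorphism, which
sends the images of the free generators to those of `ψ`. Hence every generating sequence is
the image of the canonical one under an automorphism.
-/

open Function

lemma isGenSeq_iff_surjective_lift {G : Type*} [Group G] {n : ℕ} (x : Fin n → G) :
    IsGenSeq x ↔ Surjective (FreeGroup.lift x) :=
  FreeGroup.lift_surjective_iff_closure_range_eq_top.symm

section coverKer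

variable {n : ℕ} {G : Type*} [Group G]

lemma mem_coverKer {w : FreeGroup (Fin n)} :
    w ∈ coverKer n G ↔ ∀ f : FreeGroup (Fin n) →* G, Surjective f → f w = 1 := by
  simp [coverKer, Subgroup.mem_iInf, MonoidHom.mem_ker]

lemma coverKer_le_ker {f : FreeGroup (Fin n) →* G} (hf : Surjective f) :
    coverKer n G ≤ f.ker :=
  fun _ hw => mem_coverKer.mp hw f hf

instance coverKer_finiteIndex [Finite G] : (coverKer n G).FiniteIndex := by
  have : Finite (FreeGroup (Fin n) →* G) := Finite.of_equiv _ FreeGroup.lift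
  have : (⨅ f : FreeGroup (Fin n) →* G, f.ker).FiniteIndex :=
    Subgroup.finiteIndex_iInf fun f => Subgroup.finiteIndex_ker f
  exact Subgroup.finiteIndex_of_le (le_iInf₂ fun f _ => iInf_le _ f)

lemma coverKer_le_ker_of_surjective_cover {ψ : FreeGroup (Fin n) →* HomogeneousCover n G}
    (hψ : Surjective ψ) : coverKer n G ≤ ψ.ker := by
  intro k hk
  obtain ⟨w, hw⟩ := QuotientGroup.mk_surjective (ψ k)
  rw [MonoidHom.mem_ker, ← hw, QuotientGroup.eq_one_iff, mem_coverKer]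
  intro f hf
  let q := QuotientGroup.lift (coverKer n G) f (coverKer_le_ker hf)
  have hq : Surjective q := QuotientGroup.lift_surjective_of_surjective _ f hf _
  calc f w = q (ψ k) := by rw [← hw]; rfl
    _ = 1 := mem_coverKer.mp hk (q.comp ψ) (hq.comp hψ)

end coverKer

namespace HomogeneousCover

variable {n : ℕ} {G : Type*} [Group G]

def gen (n : ℕ) (G : Type*) [Group G] : Fin n → HomogeneousCover n G :=
  fun i => QuotientGroup.mk (FreeGroup.of i)

lemma isGenSeq_gen : IsGenSeq (gen n G) := by
  have : FreeGroup.lift (gen n G) = QuotientGroup.mk' (coverKer n G) :=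
    FreeGroup.ext_hom _ _ fun i => by simp [gen]
  rw [isGenSeq_iff_surjective_lift, this]
  exact QuotientGroup.mk'_surjective _

lemma exists_mulEquiv_gen_eq [Finite G] {y : Fin n → HomogeneousCover n G}
    (hy : IsGenSeq y) : ∃ f : HomogeneousCover n G ≃* HomogeneousCover n G,
      ∀ i, f (gen n G i) = y i := by
  rw [isGenSeq_iff_surjective_lift] at hy
  let φ := QuotientGroup.lift (coverKer n G) (FreeGroup.lift y)
    (coverKer_le_ker_of_surjective_cover hy)
  have hφ : Surjective φ := QuotientGroup.lift_surjective_of_surjective _ _ hy _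
  refine ⟨MulEquiv.ofBijective φ ⟨Finite.injective_iff_surjective.mpr hφ, hφ⟩, fun i => ?_⟩
  show φ (gen n G i) = y i
  simp [φ, gen]

end HomogeneousCover

theorem cover_isHomogeneous_general (G : Type*) [Group G] [Finite G] (n : ℕ) :
    IsHomogeneous (HomogeneousCover n G) n := by
  refine ⟨⟨HomogeneousCover.gen n G, HomogeneousCover.isGenSeq_gen⟩, fun x y hx hy => ?_⟩
  obtain ⟨fx, hfx⟩ := HomogeneousCover.exists_mulEquiv_gen_eq hx
  obtain ⟨fy, hfy⟩ := HomogeneousCover.exists_mulEquiv_gen_eq hy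
  refine ⟨fx.symm.trans fy, fun i => ?_⟩
  rw [MulEquiv.trans_apply, ← hfx, MulEquiv.symm_apply_apply, hfy]

/-- `H(n,G)` is homogeneous of rank `n`. -/
theorem cover_isHomogeneous (G : Type*) [Group G] [Finite G] (n : ℕ)
    (hr : grank G ≤ n) : IsHomogeneous (HomogeneousCover n G) n :=
  cover_isHomogeneous_general G n
end

section
/- Let G be a finite abelian group that can be generated by n elements, and let k be the largest invariant factor of G (equivalently, the exponent of G). Then H(n,G) is isomorphic to (ℤ/kℤ)ⁿ, the direct product of n copies of the cyclic group of order k. -/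
section Aux

variable {n : ℕ}

/-- The `i`-th exponent-sum homomorphism. -/
noncomputable def expSum (i : Fin n) : FreeGroup (Fin n) →* Multiplicative ℤ :=
  FreeGroup.lift (fun j => Multiplicative.ofAdd (if j = i then 1 else 0))

lemma expSum_of (i j : Fin n) :
    expSum i (FreeGroup.of j) = Multiplicative.ofAdd (if j = i then (1:ℤ) else 0) :=
  FreeGroup.lift_apply_of

lemma lift_surjective {G : Type*} [Group G] {x : Fin n → G} (hx : IsGenSeq x) :
    Function.Surjective (FreeGroup.lift x) := by
  rw [← MonoidHom.range_eq_top, FreeGroup.range_lift_eq_closure]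
  exact hx

lemma hom_apply_eq_prod {G : Type*} [CommGroup G] (f : FreeGroup (Fin n) →* G)
    (w : FreeGroup (Fin n)) :
    f w = ∏ i, f (FreeGroup.of i) ^ Multiplicative.toAdd (expSum i w) := by
  have h : f = ∏ i : Fin n, (zpowersHom G (f (FreeGroup.of i))).comp (expSum i) := by
    apply FreeGroup.ext_hom
    intro j
    simp only [MonoidHom.finset_prod_apply, MonoidHom.comp_apply, expSum_of,
      zpowersHom_apply, toAdd_ofAdd]
    rw [Finset.prod_eq_single j]
    · simp
    · intro b _ hb
      simp [Ne.symm hb]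
    · simp
  conv_lhs => rw [h]
  simp [MonoidHom.finset_prod_apply, zpowersHom_apply]

end Aux

section Aux2

variable {n : ℕ}

lemma isGenSeq_update {G : Type*} [Group G] {x : Fin n → G} (hx : IsGenSeq x)
    {i j : Fin n} (hij : j ≠ i) : IsGenSeq (Function.update x i (x i * x j)) := by
  unfold IsGenSeq at hx ⊢
  rw [eq_top_iff, ← hx]
  apply Subgroup.closure_le _ |>.mpr
  rintro _ ⟨m, rfl⟩
  by_cases hm : m = i
  · subst hm
    have h1 : x m * x j ∈ Subgroup.closure (Set.range (Function.update x m (x m * x j))) :=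
      Subgroup.subset_closure ⟨m, by simp⟩
    have h2 : x j ∈ Subgroup.closure (Set.range (Function.update x m (x m * x j))) :=
      Subgroup.subset_closure ⟨j, by simp [Function.update_of_ne hij]⟩
    have := mul_mem h1 (inv_mem h2)
    simpa using this
  · exact Subgroup.subset_closure ⟨m, by simp [Function.update_of_ne hm]⟩

lemma exponent_dvd_expSum {G : Type*} [CommGroup G]
    (hgen : ∃ x : Fin n → G, IsGenSeq x) {w : FreeGroup (Fin n)}
    (hone : ∀ y : Fin n → G, IsGenSeq y → FreeGroup.lift y w = 1) (i : Fin n) :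
    (Monoid.exponent G : ℤ) ∣ Multiplicative.toAdd (expSum i w) := by
  obtain ⟨x, hx⟩ := hgen
  set e : Fin n → ℤ := fun i => Multiplicative.toAdd (expSum i w) with he
  have hprod : ∀ y : Fin n → G, IsGenSeq y → ∏ m, y m ^ e m = 1 := by
    intro y hy
    have h1 := hone y hy
    rw [hom_apply_eq_prod] at h1
    simpa using h1
  have key : ∀ (y : Fin n → G), IsGenSeq y → ∀ i j : Fin n, j ≠ i → y j ^ e i = 1 := by
    intro y hy i j hij
    have h1 := hprod y hy
    have h2 := hprod _ (isGenSeq_update hy hij)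
    have h3 : y j ^ e i =
        (∏ m, Function.update y i (y i * y j) m ^ e m) / (∏ m, y m ^ e m) := by
      rw [← Finset.prod_div_distrib, Finset.prod_eq_single i]
      · simp [mul_zpow, mul_div_assoc, mul_comm, mul_div_cancel_left]
      · intro b _ hb
        simp [Function.update_of_ne hb]
      · simp
    rw [h1, h2, div_one] at h3
    exact h3
  have hall : ∀ j, x j ^ e i = 1 := by
    intro j
    by_cases hji : j = i
    · subst hji
      by_cases hex : ∃ j' : Fin n, j' ≠ j
      · obtain ⟨j', hj'⟩ := hex
        have hz := key _ (isGenSeq_update hx (Ne.symm hj')) j j' hj'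
        rw [Function.update_self, mul_zpow, key x hx j j' hj', one_mul] at hz
        exact hz
      · push_neg at hex
        have h1 := hprod x hx
        rw [Finset.prod_eq_single j (fun b _ hb => absurd (hex b) hb) (by simp)] at h1
        exact h1
    · exact key x hx i j hji
  have hallg : ∀ g : G, g ^ e i = 1 := by
    intro g
    have hg : g ∈ Subgroup.closure (Set.range x) := hx ▸ Subgroup.mem_top g
    have hle : Subgroup.closure (Set.range x) ≤ (zpowGroupHom (e i) : G →* G).ker := by
      apply Subgroup.closure_le _ |>.mpr
      rintro _ ⟨m, rfl⟩
      exact hall m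
    exact hle hg
  have hnat : ∀ g : G, g ^ (e i).natAbs = 1 := by
    intro g
    have h1 : (orderOf g : ℤ) ∣ e i := orderOf_dvd_iff_zpow_eq_one.mpr (hallg g)
    have h2 : orderOf g ∣ (e i).natAbs := Int.ofNat_dvd.mp (Int.dvd_natAbs.mpr h1)
    exact orderOf_dvd_iff_pow_eq_one.mp h2
  have h3 : Monoid.exponent G ∣ (e i).natAbs := Monoid.exponent_dvd_of_forall_pow_eq_one hnat
  exact dvd_trans (Int.ofNat_dvd.mpr h3) (Int.natAbs_dvd.mpr dvd_rfl)

/-- The comparison map `F_n → (ℤ/kℤ)ⁿ`. -/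
noncomputable def coverPi (n k : ℕ) : FreeGroup (Fin n) →* (Fin n → Multiplicative (ZMod k)) :=
  Pi.monoidHom fun i =>
    (AddMonoidHom.toMultiplicative (Int.castAddHom (ZMod k))).comp (expSum i)

lemma coverPi_apply (k : ℕ) (w : FreeGroup (Fin n)) (i : Fin n) :
    coverPi n k w i =
      Multiplicative.ofAdd ((Multiplicative.toAdd (expSum i w) : ℤ) : ZMod k) := rfl

lemma coverPi_surjective (n k : ℕ) : Function.Surjective (coverPi n k) := by
  intro v
  choose m hm using fun i => ZMod.intCast_surjective (Multiplicative.toAdd (v i))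
  refine ⟨(List.ofFn fun i => FreeGroup.of i ^ m i).prod, ?_⟩
  funext j
  rw [coverPi_apply]
  have : expSum j (List.ofFn fun i => FreeGroup.of i ^ m i).prod = Multiplicative.ofAdd (m j) := by
    rw [map_list_prod, List.map_ofFn, List.prod_ofFn]
    simp only [Function.comp, map_zpow, expSum_of]
    rw [Finset.prod_eq_single j]
    · simp [← ofAdd_zsmul]
    · intro b _ hb
      simp [hb]
    · simp
  rw [this]
  simp [hm]

end Aux2

lemma coverKer_eq {G : Type*} [CommGroup G] [Finite G] {n : ℕ}
    (hgen : ∃ x : Fin n → G, IsGenSeq x) :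
    coverKer n G = (coverPi n (Monoid.exponent G)).ker := by
  ext w
  simp only [coverKer, Subgroup.mem_iInf, Set.mem_setOf_eq, MonoidHom.mem_ker]
  constructor
  · intro hw
    have hone : ∀ y : Fin n → G, IsGenSeq y → FreeGroup.lift y w = 1 := fun y hy =>
      hw _ (lift_surjective hy)
    funext i
    rw [coverPi_apply]
    have := exponent_dvd_expSum hgen hone i
    rw [← ZMod.intCast_zmod_eq_zero_iff_dvd] at this
    simp [this]
  · intro hw f hf
    rw [hom_apply_eq_prod]
    apply Finset.prod_eq_one
    intro i _
    have hi : ((Multiplicative.toAdd (expSum i w) : ℤ) : ZMod (Monoid.exponent G)) = 0 := by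
      have := congrFun hw i
      rw [coverPi_apply] at this
      simpa using this
    obtain ⟨c, hc⟩ := (ZMod.intCast_zmod_eq_zero_iff_dvd _ _).mp hi
    rw [hc, zpow_mul, zpow_natCast, Monoid.pow_exponent_eq_one, one_zpow]


/-- For a finite abelian `n`-generated group `G` with largest invariant factor
(= exponent) `k`, `H(n,G) ≅ (ℤ/kℤ)ⁿ`. -/
theorem cover_of_abelian (G : Type*) [CommGroup G] [Finite G] (n : ℕ)
    (hgen : ∃ x : Fin n → G, IsGenSeq x) (k : ℕ) (hk : k = Monoid.exponent G) :
    Nonempty (HomogeneousCover n G ≃* (Fin n → Multiplicative (ZMod k))) := by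
  subst hk
  exact ⟨(QuotientGroup.quotientMulEquivOfEq (coverKer_eq hgen)).trans
    (QuotientGroup.quotientKerEquivOfSurjective _ (coverPi_surjective n _))⟩
end
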